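/- Let Ω ⊆ ℝ^n be open, δ > 0, h > 0, and let E be a compact set with Per_K(E) < ∞ which is strongly K-outward minimizing in Ω with constant δ, and such that {x : dist(x,E) < δh} ⊆ Ω. Let T be an ATW minimizer for E at step h with |T∖E| = 0. Then for every z ∈ ℝ^n with |z| < δh one has |(T+z)∖E| = 0 (equivalently, the set of Lebesgue density-one points of T translated by any vector of norm < δh is contained in E up to a null set). In particular, if the interior of E is empty, then |T| = 0. -/

import Mathlib

open MeasureTheory Set Filter Metric Topology
open scoped ENNReal Pointwise

noncomputable section

abbrev Euc (n : ℕ) := EuclideanSpace ℝ (Fin n)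

/-- Admissible kernel: measurable, nonnegative and even away from the origin,
with `∫ min(1,|x|) K(x) dx < ∞`. -/
def KernelOK {n : ℕ} (K : Euc n → ℝ) : Prop :=
  Measurable K ∧ (∀ x : Euc n, x ≠ 0 → 0 ≤ K x) ∧ (∀ x : Euc n, x ≠ 0 → K (-x) = K x) ∧
    (∫⁻ x : Euc n, ENNReal.ofReal (min 1 ‖x‖ * K x)) < ⊤

/-- The `K`-perimeter of `E` in `Ω`. -/
def perK {n : ℕ} (K : Euc n → ℝ) (E Ω : Set (Euc n)) : ℝ≥0∞ :=
  (∫⁻ x in E, ∫⁻ y in Ω \ E, ENNReal.ofReal (K (x - y))) +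
  (∫⁻ x in E ∩ Ω, ∫⁻ y in (Ω ∪ E)ᶜ, ENNReal.ofReal (K (x - y)))

/-- The (total) `K`-perimeter of `E`. -/
def perKtot {n : ℕ} (K : Euc n → ℝ) (E : Set (Euc n)) : ℝ≥0∞ :=
  ∫⁻ x in E, ∫⁻ y in Eᶜ, ENNReal.ofReal (K (x - y))

/-- `A` is compactly contained in `Ω`. -/
def CptIn {n : ℕ} (A Ω : Set (Euc n)) : Prop :=
  IsCompact (closure A) ∧ closure A ⊆ Ω

/-- `E` is `K`-outward minimizing in `Ω`. -/
def OutMin {n : ℕ} (K : Euc n → ℝ) (E Ω : Set (Euc n)) : Prop :=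
  ∀ F : Set (Euc n), MeasurableSet F → E ⊆ F → CptIn (F \ E) Ω →
    perK K E Ω ≤ perK K F Ω

/-- `E` is strongly `K`-outward minimizing in `Ω` with constant `δ`. -/
def StrongOutMin {n : ℕ} (K : Euc n → ℝ) (δ : ℝ) (E Ω : Set (Euc n)) : Prop :=
  ∀ F : Set (Euc n), MeasurableSet F → E ⊆ F → CptIn (F \ E) Ω →
    perK K E Ω + ENNReal.ofReal δ * volume (F \ E) ≤ perK K F Ω

end
noncomputable section
open MeasureTheory Set Filter Metric Topology
open scoped ENNReal Pointwise

/-- The truncated `K`-curvature of `G` at `x`, with truncation parameter `ε`: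
`∫_{ℝⁿ∖B(x,ε)} (χ_{Gᶜ}(y) − χ_G(y)) K(x−y) dy`. -/
def truncCurv {n : ℕ} (K : Euc n → ℝ) (G : Set (Euc n)) (x : Euc n) (ε : ℝ) : ℝ :=
  ∫ y in (Metric.ball x ε)ᶜ,
    ((Gᶜ).indicator (fun _ => (1:ℝ)) y - G.indicator (fun _ => (1:ℝ)) y) * K (x - y)

/-- `G` has compact boundary of class `C^{1,1}`: the boundary is compact, and `G` is the
sublevel set of a `C^1` function with Lipschitz gradient which is nondegenerate on the
boundary. -/
def HasCptC11Boundary {n : ℕ} (G : Set (Euc n)) : Prop :=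
  IsCompact (frontier G) ∧
  ∃ φ : Euc n → ℝ, ContDiff ℝ 1 φ ∧ (∃ L : NNReal, LipschitzWith L (fderiv ℝ φ)) ∧
    G = {x | φ x ≤ 0} ∧ frontier G = {x | φ x = 0} ∧
    ∀ x ∈ frontier G, fderiv ℝ φ x ≠ 0

/-- `H^K_A(x) ≥ c` in the viscosity sense: every set `G` with compact `C^{1,1}` boundary
with `G ⊆ A` and `x ∈ ∂G` has `K`-curvature at least `c` at `x` (the curvature being the
limit of the truncated curvatures). -/
def ViscCurvGE {n : ℕ} (K : Euc n → ℝ) (A : Set (Euc n)) (x : Euc n) (c : ℝ) : Prop :=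
  ∀ G : Set (Euc n), HasCptC11Boundary G → G ⊆ A → x ∈ frontier G →
    ∀ L : ℝ, Tendsto (truncCurv K G x) (𝓝[>] (0:ℝ)) (𝓝 L) → c ≤ L

/-- Signed distance function from `E` (positive inside). -/
def sgnDist {n : ℕ} (E : Set (Euc n)) (x : Euc n) : ℝ :=
  Metric.infDist x Eᶜ - Metric.infDist x E

/-- The Almgren–Taylor–Wang energy `Per_K(G) − (1/h)∫_G d_E`. -/
def atwEnergy {n : ℕ} (K : Euc n → ℝ) (E : Set (Euc n)) (h : ℝ) (G : Set (Euc n)) : ℝ :=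
  (perKtot K G).toReal - (1/h) * ∫ x in G, sgnDist E x

/-- `T` is an ATW minimizer for `E` at step `h`: it minimizes the ATW energy among all
measurable sets (competitors with infinite energy being irrelevant). -/
def ATWMin {n : ℕ} (K : Euc n → ℝ) (E : Set (Euc n)) (h : ℝ) (T : Set (Euc n)) : Prop :=
  MeasurableSet T ∧ perKtot K T < ⊤ ∧ IntegrableOn (sgnDist E) T ∧
  ∀ G : Set (Euc n), MeasurableSet G → perKtot K G < ⊤ → IntegrableOn (sgnDist E) G →
    atwEnergy K E h T ≤ atwEnergy K E h G

/-- The set of Lebesgue density-one points of `T`. -/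
def densityPts {n : ℕ} (T : Set (Euc n)) : Set (Euc n) :=
  {x | Tendsto (fun ρ : ℝ =>
      volume (T ∩ Metric.closedBall x ρ) / volume (Metric.closedBall x ρ))
    (𝓝[>] (0:ℝ)) (𝓝 1)}

/-- The nonlocal functional `J_K(v) = ½∬ |v(x)−v(y)| K(x−y) dx dy`. -/
def JK {n : ℕ} (K : Euc n → ℝ) (v : Euc n → ℝ) : ℝ≥0∞ :=
  (1/2 : ℝ≥0∞) * ∫⁻ x : Euc n, ∫⁻ y : Euc n,
    ENNReal.ofReal |v x - v y| * ENNReal.ofReal (K (x - y))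

end

/-!
Suppose first `T ⊆ E`, fix `z` with `|z| < δh` and compare `T` with `T ∩ (E - z)`. Testing the
strong outward minimality of `E` against `E ∪ (T + z)` (admissible because `T + z` lies within
`δh` of `E`), and using submodularity and translation invariance of `Per_K`, removing
`T \ (E - z)` from `T` lowers the perimeter by at least `δ |T \ (E - z)|`. Since `d_E ≤ |z|` on
`T \ (E - z)`, it raises the bulk term of the ATW energy by at most `(|z| / h) |T \ (E - z)|`,
so minimality of `T` forces `|T \ (E - z)| = 0`. A general `T` agrees with `T ∩ E` up to a null
set. If `|T| > 0`, running this along a countable dense set of `z` yields a point `x ∈ T` with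
`B(x, δh) ⊆ E`, as `E` is closed.
-/

open MeasureTheory Set Filter Metric Topology
open scoped ENNReal

theorem indicator_prod_compl_inter_add_union_le {α : Type*} (S A : Set α) (f : α × α → ℝ≥0∞)
    (p : α × α) :
    ((S ∩ A) ×ˢ (S ∩ A)ᶜ).indicator f p + ((S ∪ A) ×ˢ (S ∪ A)ᶜ).indicator f p ≤
      (S ×ˢ Sᶜ).indicator f p + (A ×ˢ Aᶜ).indicator f p := by
  obtain ⟨x, y⟩ := p
  by_cases hxS : x ∈ S <;> by_cases hxA : x ∈ A <;> by_cases hyS : y ∈ S <;>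
    by_cases hyA : y ∈ A <;> simp [hxS, hxA, hyS, hyA]

section Perimeter

variable {n : ℕ} {K : Euc n → ℝ}

noncomputable def kernelInteraction (K : Euc n → ℝ) (A B : Set (Euc n)) : ℝ≥0∞ :=
  ∫⁻ x in A, ∫⁻ y in B, ENNReal.ofReal (K (x - y))

theorem perKtot_eq_kernelInteraction (E : Set (Euc n)) :
    perKtot K E = kernelInteraction K E Eᶜ := rfl

theorem measurable_kernel_sub (hK : Measurable K) :
    Measurable fun p : Euc n × Euc n => ENNReal.ofReal (K (p.1 - p.2)) :=
  ENNReal.measurable_ofReal.comp (hK.comp (measurable_fst.sub measurable_snd))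

theorem kernelInteraction_union_left (A₁ : Set (Euc n)) {A₂ : Set (Euc n)} (B : Set (Euc n))
    (hA₂ : MeasurableSet A₂) (hA : Disjoint A₁ A₂) :
    kernelInteraction K (A₁ ∪ A₂) B = kernelInteraction K A₁ B + kernelInteraction K A₂ B :=
  lintegral_union hA₂ hA

theorem kernelInteraction_union_right (hK : Measurable K) (A B₁ : Set (Euc n))
    {B₂ : Set (Euc n)} (hB₂ : MeasurableSet B₂) (hB : Disjoint B₁ B₂) :
    kernelInteraction K A (B₁ ∪ B₂) = kernelInteraction K A B₁ + kernelInteraction K A B₂ := by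
  unfold kernelInteraction
  rw [← lintegral_add_left (measurable_kernel_sub hK).lintegral_prod_right']
  exact lintegral_congr fun x => lintegral_union hB₂ hB

theorem kernelInteraction_congr_ae {A A' B B' : Set (Euc n)} (hA : A =ᵐ[volume] A')
    (hB : B =ᵐ[volume] B') : kernelInteraction K A B = kernelInteraction K A' B' := by
  unfold kernelInteraction
  rw [setLIntegral_congr hA]
  exact lintegral_congr fun x => setLIntegral_congr hB

theorem kernelInteraction_preimage_sub (hK : Measurable K) {A B : Set (Euc n)}
    (hA : MeasurableSet A) (hB : MeasurableSet B) (c : Euc n) :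
    kernelInteraction K ((· - c) ⁻¹' A) ((· - c) ⁻¹' B) = kernelInteraction K A B := by
  have hc := measurePreserving_sub_right (volume : Measure (Euc n)) c
  unfold kernelInteraction
  calc ∫⁻ x in (· - c) ⁻¹' A, ∫⁻ y in (· - c) ⁻¹' B, ENNReal.ofReal (K (x - y))
      = ∫⁻ x in (· - c) ⁻¹' A, ∫⁻ y in B, ENNReal.ofReal (K (x - c - y)) := by
        refine lintegral_congr fun x => ?_
        simpa only [sub_sub_sub_cancel_right] using hc.setLIntegral_comp_preimage hB
          (f := fun y => ENNReal.ofReal (K (x - c - y))) (by fun_prop)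
    _ = ∫⁻ x in A, ∫⁻ y in B, ENNReal.ofReal (K (x - y)) :=
        hc.setLIntegral_comp_preimage hA (measurable_kernel_sub hK).lintegral_prod_right'

theorem perKtot_congr_ae {E F : Set (Euc n)} (h : E =ᵐ[volume] F) : perKtot K E = perKtot K F :=
  kernelInteraction_congr_ae h h.compl

theorem perKtot_preimage_sub (hK : Measurable K) {E : Set (Euc n)} (hE : MeasurableSet E)
    (c : Euc n) : perKtot K ((· - c) ⁻¹' E) = perKtot K E :=
  kernelInteraction_preimage_sub hK hE hE.compl c

theorem perKtot_eq_perK_add (hK : Measurable K) {E : Set (Euc n)} (Ω : Set (Euc n))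
    (hE : MeasurableSet E) (hΩ : MeasurableSet Ω) :
    perKtot K E = perK K E Ω + kernelInteraction K (E \ Ω) (Ω ∪ E)ᶜ := by
  have hcompl : Eᶜ = (Ω \ E) ∪ (Ω ∪ E)ᶜ := by
    ext y; by_cases hy : y ∈ Ω <;> by_cases hy' : y ∈ E <;> simp [hy, hy']
  have hsplit : kernelInteraction K E (Ω ∪ E)ᶜ =
      kernelInteraction K (E ∩ Ω) (Ω ∪ E)ᶜ + kernelInteraction K (E \ Ω) (Ω ∪ E)ᶜ := by
    rw [← kernelInteraction_union_left _ _ (hE.diff hΩ) disjoint_sdiff_inter.symm,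
      inter_union_sdiff]
  rw [perKtot_eq_kernelInteraction, hcompl,
    kernelInteraction_union_right hK _ _ (hΩ.union hE).compl
      (disjoint_left.2 fun y hy hy' => hy' (Or.inl hy.1)),
    hsplit, ← add_assoc]
  rfl

theorem perKtot_eq_lintegral_indicator (hK : Measurable K) {E : Set (Euc n)}
    (hE : MeasurableSet E) :
    perKtot K E = ∫⁻ p, (E ×ˢ Eᶜ).indicator (fun p => ENNReal.ofReal (K (p.1 - p.2))) p
      ∂volume.prod volume := by
  rw [lintegral_indicator (hE.prod hE.compl),
    setLIntegral_prod _ (measurable_kernel_sub hK).aemeasurable]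
  rfl

theorem perKtot_inter_add_union_le (hK : Measurable K) {S A : Set (Euc n)}
    (hS : MeasurableSet S) (hA : MeasurableSet A) :
    perKtot K (S ∩ A) + perKtot K (S ∪ A) ≤ perKtot K S + perKtot K A := by
  have hk := measurable_kernel_sub hK
  simp only [perKtot_eq_lintegral_indicator hK, hS, hA, hS.inter hA, hS.union hA]
  rw [← lintegral_add_left (hk.indicator ((hS.inter hA).prod (hS.inter hA).compl)),
    ← lintegral_add_left (hk.indicator (hS.prod hS.compl))]
  exact lintegral_mono (indicator_prod_compl_inter_add_union_le S A _)

end Perimeter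

section OutwardMinimizing

variable {n : ℕ} {K : Euc n → ℝ} {δ : ℝ} {E Ω : Set (Euc n)}

theorem cptIn_of_subset_isCompact {A C : Set (Euc n)} (hAC : A ⊆ C) (hC : IsCompact C)
    (hCΩ : C ⊆ Ω) : CptIn A Ω :=
  have hcl : closure A ⊆ C := closure_minimal hAC hC.isClosed
  ⟨hC.of_isClosed_subset isClosed_closure hcl, hcl.trans hCΩ⟩

/-- Competitors agree with `E` outside `Ω`, so the interactions not seen by `perK K · Ω`
are the same for both. -/
theorem StrongOutMin.perKtot_add_le (hmin : StrongOutMin K δ E Ω) (hK : Measurable K)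
    (hE : MeasurableSet E) (hΩ : MeasurableSet Ω) {F : Set (Euc n)} (hF : MeasurableSet F)
    (hEF : E ⊆ F) (hcpt : CptIn (F \ E) Ω) :
    perKtot K E + ENNReal.ofReal δ * volume (F \ E) ≤ perKtot K F := by
  have hFE : F \ E ⊆ Ω := subset_closure.trans hcpt.2
  have hout : F \ Ω = E \ Ω := by
    ext x; constructor
    · exact fun hx => ⟨by_contra fun hxE => hx.2 (hFE ⟨hx.1, hxE⟩), hx.2⟩
    · exact fun hx => ⟨hEF hx.1, hx.2⟩
  have hunion : Ω ∪ F = Ω ∪ E := by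
    rw [← union_sdiff_cancel hEF, union_comm E, ← union_assoc, union_eq_left.2 hFE]
  rw [perKtot_eq_perK_add hK Ω hE hΩ, perKtot_eq_perK_add hK Ω hF hΩ, hout, hunion,
    add_right_comm]
  gcongr
  exact hmin F hF hEF hcpt

theorem StrongOutMin.perKtot_inter_preimage_add_le (hmin : StrongOutMin K δ E Ω)
    (hK : Measurable K) (hE : MeasurableSet E) (hEfin : perKtot K E < ⊤)
    (hΩ : MeasurableSet Ω) {S : Set (Euc n)} (hS : MeasurableSet S) (z : Euc n)
    (hcpt : CptIn ((· - z) ⁻¹' S \ E) Ω) :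
    perKtot K (S ∩ (· + z) ⁻¹' E) + ENNReal.ofReal δ * volume (S \ (· + z) ⁻¹' E) ≤
      perKtot K S := by
  set A := (· + z) ⁻¹' E
  set W := (· - z) ⁻¹' S
  have hA : MeasurableSet A := hE.preimage (measurable_add_const z)
  have hW : MeasurableSet W := hS.preimage (measurable_sub_const z)
  have hpre : ∀ B : Set (Euc n), (· - z) ⁻¹' ((· + z) ⁻¹' B) = B := fun B => by
    ext x; simp
  have hvol : volume ((E ∪ W) \ E) = volume (S \ A) := by
    rw [union_sdiff_left, ← (measurePreserving_sub_right volume z).measure_preimage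
      (hS.diff hA).nullMeasurableSet, preimage_sdiff, hpre]
  have hinter : perKtot K (E ∩ W) = perKtot K (S ∩ A) := by
    rw [← perKtot_preimage_sub hK (hS.inter hA) z, preimage_inter, hpre, inter_comm]
  have hcomp := hmin.perKtot_add_le hK hE hΩ (hE.union hW) subset_union_left
    (by rwa [union_sdiff_left])
  rw [hvol] at hcomp
  have hsub := perKtot_inter_add_union_le hK hE hW
  rw [hinter, perKtot_preimage_sub hK hS z] at hsub
  refine (ENNReal.add_le_add_iff_left hEfin.ne).1 ?_
  calc perKtot K E + (perKtot K (S ∩ A) + ENNReal.ofReal δ * volume (S \ A))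
      = perKtot K (S ∩ A) + (perKtot K E + ENNReal.ofReal δ * volume (S \ A)) := by ring
    _ ≤ perKtot K (S ∩ A) + perKtot K (E ∪ W) := by gcongr
    _ ≤ perKtot K E + perKtot K S := hsub

end OutwardMinimizing

section ATW

variable {n : ℕ} {K : Euc n → ℝ} {E T : Set (Euc n)} {h : ℝ}

theorem sgnDist_le_norm_of_add_notMem {x z : Euc n} (hxz : x + z ∉ E) : sgnDist E x ≤ ‖z‖ :=
  calc sgnDist E x ≤ infDist x Eᶜ := sub_le_self _ infDist_nonneg
    _ ≤ dist x (x + z) := infDist_le_dist_of_mem hxz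
    _ = ‖z‖ := dist_self_add_right z x

theorem ATWMin.congr_ae (hT : ATWMin K E h T) {T' : Set (Euc n)} (hT' : MeasurableSet T')
    (hae : T' =ᵐ[volume] T) : ATWMin K E h T' := by
  have henergy : atwEnergy K E h T' = atwEnergy K E h T := by
    rw [atwEnergy, atwEnergy, perKtot_congr_ae hae, setIntegral_congr_set hae]
  refine ⟨hT', (perKtot_congr_ae hae).trans_lt hT.2.1, hT.2.2.1.congr_set_ae hae,
    fun G hG hGfin hGint => henergy ▸ hT.2.2.2 G hG hGfin hGint⟩

theorem ATWMin.perKtot_sub_le (hT : ATWMin K E h T) {G : Set (Euc n)} (hG : MeasurableSet G)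
    (hGT : G ⊆ T) (hGfin : perKtot K G < ⊤) :
    (perKtot K T).toReal - (perKtot K G).toReal ≤ (1 / h) * ∫ x in T \ G, sgnDist E x := by
  have hmin := hT.2.2.2 G hG hGfin (hT.2.2.1.mono_set hGT)
  rw [atwEnergy, atwEnergy] at hmin
  rw [setIntegral_sdiff hG hT.2.2.1 hGT]
  linarith

theorem ATWMin.measure_sdiff_preimage_add_eq_zero (hT : ATWMin K E h T) (hK : Measurable K)
    {δ : ℝ} {Ω : Set (Euc n)} (hh : 0 < h) (hΩ : MeasurableSet Ω) (hEcpt : IsCompact E)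
    (hEfin : perKtot K E < ⊤) (hmin : StrongOutMin K δ E Ω)
    (hnbhd : {x : Euc n | infDist x E < δ * h} ⊆ Ω) (hTE : T ⊆ E) {z : Euc n}
    (hz : ‖z‖ < δ * h) : volume (T \ (· + z) ⁻¹' E) = 0 := by
  set A := (· + z) ⁻¹' E
  have hE : MeasurableSet E := hEcpt.isClosed.measurableSet
  have hA : MeasurableSet A := hE.preimage (measurable_add_const z)
  have hδ : 0 < δ := pos_of_mul_pos_left ((norm_nonneg z).trans_lt hz) hh.le
  have hshift : (· - z) ⁻¹' E ⊆ Ω := fun y hy => hnbhd <|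
    calc infDist y E ≤ dist y (y - z) := infDist_le_dist_of_mem hy
      _ = ‖z‖ := by rw [dist_eq_norm, sub_sub_cancel]
      _ < δ * h := hz
  have hcpt : CptIn ((· - z) ⁻¹' T \ E) Ω :=
    cptIn_of_subset_isCompact (sdiff_subset.trans (preimage_mono hTE))
      ((Homeomorph.subRight z).isCompact_preimage.2 hEcpt) hshift
  have hdrop := hmin.perKtot_inter_preimage_add_le hK hE hEfin hΩ hT.1 z hcpt
  have hGfin : perKtot K (T ∩ A) < ⊤ := (le_self_add.trans hdrop).trans_lt hT.2.1
  have hvolfin : volume (T \ A) < ⊤ :=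
    (measure_mono (sdiff_subset.trans hTE)).trans_lt hEcpt.measure_lt_top
  set m := (volume (T \ A)).toReal
  have hdrop' : (perKtot K (T ∩ A)).toReal + δ * m ≤ (perKtot K T).toReal := by
    have := ENNReal.toReal_mono hT.2.1.ne hdrop
    rwa [ENNReal.toReal_add hGfin.ne (ENNReal.mul_ne_top ENNReal.ofReal_ne_top hvolfin.ne),
      ENNReal.toReal_mul, ENNReal.toReal_ofReal hδ.le] at this
  have hgain := hT.perKtot_sub_le (hT.1.inter hA) inter_subset_left hGfin
  rw [sdiff_self_inter] at hgain
  have hbulk : ∫ x in T \ A, sgnDist E x ≤ ‖z‖ * m := by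
    calc ∫ x in T \ A, sgnDist E x ≤ ∫ _ in T \ A, ‖z‖ :=
          setIntegral_mono_on (hT.2.2.1.mono_set sdiff_subset) (integrableOn_const hvolfin.ne)
            (hT.1.diff hA) fun x hx => sgnDist_le_norm_of_add_notMem hx.2
      _ = ‖z‖ * m := by rw [setIntegral_const, smul_eq_mul, measureReal_def, mul_comm]
  have hm : m = 0 := by
    have hzh : ‖z‖ / h < δ := (div_lt_iff₀ hh).2 hz
    have hδm : δ * m ≤ ‖z‖ / h * m :=
      calc δ * m ≤ (1 / h) * ∫ x in T \ A, sgnDist E x := by linarith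
        _ ≤ (1 / h) * (‖z‖ * m) := by gcongr
        _ = ‖z‖ / h * m := by ring
    refine le_antisymm ?_ ENNReal.toReal_nonneg
    nlinarith
  exact ((ENNReal.toReal_eq_zero_iff _).1 hm).resolve_right hvolfin.ne

end ATW

theorem exists_ball_subset_of_measure_sdiff_preimage_add_eq_zero {X : Type*}
    [NormedAddCommGroup X] [TopologicalSpace.SeparableSpace X] [MeasurableSpace X]
    (μ : Measure X) {E T : Set X} (hE : IsClosed E) (hT : μ T ≠ 0) {r : ℝ}
    (hnull : ∀ z : X, ‖z‖ < r → μ (T \ (· + z) ⁻¹' E) = 0) : ∃ x ∈ T, ball x r ⊆ E := by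
  obtain ⟨D, hDc, hD⟩ := TopologicalSpace.exists_countable_dense X
  set N := ⋃ z ∈ D ∩ ball 0 r, T \ (· + z) ⁻¹' E
  have hN : μ N = 0 := (measure_biUnion_null_iff (hDc.mono inter_subset_left)).2
    fun z hz => hnull z (mem_ball_zero_iff.1 hz.2)
  obtain ⟨x, hxT, hxN⟩ : (T \ N).Nonempty :=
    nonempty_of_measure_ne_zero (by rwa [measure_sdiff_null hN])
  have hball : ball 0 r ⊆ (x + ·) ⁻¹' E := by
    refine (hD.open_subset_closure_inter isOpen_ball).trans (closure_minimal ?_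
      (hE.preimage (continuous_const.add continuous_id)))
    intro z hz
    by_contra hxz
    exact hxN (mem_biUnion ⟨hz.2, hz.1⟩ ⟨hxT, hxz⟩)
  refine ⟨x, hxT, fun y hy => ?_⟩
  simpa using hball (mem_ball_zero_iff.2 (mem_ball_iff_norm.1 hy))

/-- one ATW step starting from a strongly `K`-outward minimizing set with
constant `δ` is contained in `E` even after translating by any vector of norm `< δh`;
in particular if `E` has empty interior the ATW minimizer is null. -/
theorem atw_strong_retraction {n : ℕ} (K : Euc n → ℝ) (hK : KernelOK K)
    (Ω E T : Set (Euc n)) (δ h : ℝ) (hδ : 0 < δ) (hh : 0 < h) (hΩ : IsOpen Ω)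
    (hEcpt : IsCompact E) (hEfin : perKtot K E < ⊤)
    (hEmin : StrongOutMin K δ E Ω)
    (hnbhd : {x : Euc n | Metric.infDist x E < δ * h} ⊆ Ω)
    (hT : ATWMin K E h T) (hTE : volume (T \ E) = 0) :
    (∀ z : Euc n, ‖z‖ < δ * h → volume (((fun x => x + z) '' T) \ E) = 0) ∧
    (interior E = ∅ → volume T = 0) := by
  have hE : MeasurableSet E := hEcpt.isClosed.measurableSet
  have hTE' : ATWMin K E h (T ∩ E) :=
    hT.congr_ae (hT.1.inter hE)
      (ae_eq_set.2 ⟨by rw [sdiff_eq_empty.2 inter_subset_left, measure_empty],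
        by rwa [sdiff_self_inter]⟩)
  have hnull : ∀ z : Euc n, ‖z‖ < δ * h → volume (T \ (· + z) ⁻¹' E) = 0 := by
    intro z hz
    have hsplit : T \ (· + z) ⁻¹' E ⊆ (T \ E) ∪ (T ∩ E) \ (· + z) ⁻¹' E := fun x hx => by
      by_cases hxE : x ∈ E
      exacts [Or.inr ⟨⟨hx.1, hxE⟩, hx.2⟩, Or.inl ⟨hx.1, hxE⟩]
    exact measure_mono_null hsplit (measure_union_null hTE
      (hTE'.measure_sdiff_preimage_add_eq_zero hK.1 hh hΩ.measurableSet hEcpt hEfin hEmin hnbhd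
        inter_subset_right hz))
  refine ⟨fun z hz => ?_, fun hint => ?_⟩
  · rw [← image_sdiff_preimage, image_add_right, measure_preimage_add_right]
    exact hnull z hz
  · by_contra hT0
    obtain ⟨x, -, hx⟩ :=
      exists_ball_subset_of_measure_sdiff_preimage_add_eq_zero volume hEcpt.isClosed hT0 hnull
    have hxE : x ∈ interior E :=
      mem_interior.2 ⟨_, hx, isOpen_ball, mem_ball_self (by positivity)⟩
    simp [hint] at hxE
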